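/- arXiv:1501.05760 — 3 statements merged into one kernel-verified Lean document; each statement's English description precedes it below -/
import Mathlib

section
/- Let W be the ring of Witt vectors of a perfect field of characteristic p, and let A_t be the ring of power series ∑ aₙ tⁿ/n! with aₙ ∈ W such that |aₙ/n!| rⁿ → 0 for all 0 < r < 1 (a subring of K[[t]] where K = Frac(W)). If f ∈ A_t has constant term zero, then fⁿ ∈ n!·A_t for every n ≥ 1. -/
/-!
Write `f = ∑ aₘ tᵐ/m!`. The bound `‖aₘ‖ ≤ 1` is a bound on `‖m! · coeff m f‖`, and such
bounds multiply because `(i + j)! = (i+j choose i) · i! · j!` with `‖(i+j choose i)‖ ≤ 1` in an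
ultrametric field. Differentiating, `(fⁿ⁺¹)' = (n + 1) fⁿ f'` with `fⁿ ∈ n! A_t` and `f' ∈ A_t`,
so `(fⁿ⁺¹)' ∈ (n + 1)! A_t`; since `fⁿ⁺¹` has no constant term, the coefficients of `fⁿ⁺¹` in the
basis `tᵐ/m!` are those of its derivative shifted by one, hence `fⁿ⁺¹ ∈ (n + 1)! A_t`.
The decay condition passes to products because coefficients bounded at radius `s` decay at
every radius `r < s`.
-/

open PowerSeries Filter Nat

/-- `A_t` with `W = ℤ_[p]`, `K = ℚ_[p]`; the first clause says `aₙ = n! · coeff n f ∈ ℤ_[p]`. -/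
def MemAt (p : ℕ) [Fact p.Prime] (f : PowerSeries ℚ_[p]) : Prop :=
  (∀ n : ℕ, ‖(n ! : ℚ_[p]) * PowerSeries.coeff n f‖ ≤ 1) ∧
  ∀ r : ℝ, 0 < r → r < 1 →
    Tendsto (fun n : ℕ => ‖PowerSeries.coeff n f‖ * r ^ n) atTop (nhds 0)

open Topology

theorem factorial_mul_coeff_succ {R : Type*} [CommSemiring R] (g : R⟦X⟧) (m : ℕ) :
    ((m + 1)! : R) * coeff (m + 1) g = m ! * coeff m (d⁄dX R g) := by
  rw [coeff_derivative, Nat.factorial_succ]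
  push_cast
  ring

theorem tendsto_mul_pow_of_forall_mul_pow_le {a : ℕ → ℝ} (ha : ∀ i, 0 ≤ a i) {r s M : ℝ}
    (hr : 0 ≤ r) (hrs : r < s) (hM : ∀ i, a i * s ^ i ≤ M) :
    Tendsto (fun i => a i * r ^ i) atTop (𝓝 0) := by
  have hs : 0 < s := hr.trans_lt hrs
  have hgeom : Tendsto (fun i => M * (r / s) ^ i) atTop (𝓝 0) := by
    simpa using (tendsto_pow_atTop_nhds_zero_of_lt_one (div_nonneg hr hs.le)
      ((div_lt_one hs).mpr hrs)).const_mul M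
  refine squeeze_zero (fun i => mul_nonneg (ha i) (pow_nonneg hr i)) (fun i => ?_) hgeom
  calc a i * r ^ i = a i * s ^ i * (r / s) ^ i := by rw [div_pow]; field_simp
    _ ≤ M * (r / s) ^ i := by gcongr; exact hM i

section Ultrametric

variable {K : Type*} [NormedField K] [IsUltrametricDist K]

theorem norm_coeff_mul_mul_le {w : ℕ → ℝ} (hw : ∀ i j, w (i + j) ≤ w i * w j)
    (hw0 : ∀ i, 0 ≤ w i) {f g : K⟦X⟧} {Mf Mg : ℝ} (hf : ∀ i, ‖coeff i f‖ * w i ≤ Mf)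
    (hg : ∀ j, ‖coeff j g‖ * w j ≤ Mg) (n : ℕ) : ‖coeff n (f * g)‖ * w n ≤ Mf * Mg := by
  obtain ⟨⟨i, j⟩, hij, hle⟩ := IsUltrametricDist.exists_norm_finsetSum_le_of_nonempty
    (Finset.HasAntidiagonal.nonempty_antidiagonal n)
    (fun q => coeff q.1 f * coeff q.2 g)
  obtain rfl : i + j = n := Finset.HasAntidiagonal.mem_antidiagonal.mp hij
  have hMf : 0 ≤ Mf := (mul_nonneg (norm_nonneg _) (hw0 0)).trans (hf 0)
  calc ‖coeff (i + j) (f * g)‖ * w (i + j) ≤ ‖coeff i f * coeff j g‖ * (w i * w j) := by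
        rw [coeff_mul]
        exact mul_le_mul hle (hw i j) (hw0 _) (norm_nonneg _)
    _ = (‖coeff i f‖ * w i) * (‖coeff j g‖ * w j) := by rw [norm_mul]; ring
    _ ≤ Mf * Mg := mul_le_mul (hf i) (hg j) (mul_nonneg (norm_nonneg _) (hw0 _)) hMf

theorem norm_coeff_pow_mul_le {w : ℕ → ℝ} (hw : ∀ i j, w (i + j) ≤ w i * w j)
    (hw0 : ∀ i, 0 ≤ w i) (hw1 : w 0 ≤ 1) {f : K⟦X⟧} {M : ℝ} (hf : ∀ i, ‖coeff i f‖ * w i ≤ M)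
    (n i : ℕ) : ‖coeff i (f ^ n)‖ * w i ≤ M ^ n := by
  induction n generalizing i with
  | zero => rcases i with _ | i <;> simp [coeff_one, hw1]
  | succ n ih => rw [pow_succ]; exact norm_coeff_mul_mul_le hw hw0 ih hf i

theorem norm_factorial_add_le (i j : ℕ) : ‖((i + j)! : K)‖ ≤ ‖(i ! : K)‖ * ‖(j ! : K)‖ := by
  rw [← Nat.add_choose_mul_factorial_mul_factorial, Nat.cast_mul, Nat.cast_mul, norm_mul,
    norm_mul, mul_assoc]
  exact mul_le_of_le_one_left (by positivity) (IsUltrametricDist.norm_natCast_le_one K _)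

theorem tendsto_norm_coeff_pow_mul_pow {f : K⟦X⟧}
    (hf : ∀ r : ℝ, 0 < r → r < 1 → Tendsto (fun i => ‖coeff i f‖ * r ^ i) atTop (𝓝 0))
    (n : ℕ) {r : ℝ} (hr : 0 < r) (hr1 : r < 1) :
    Tendsto (fun i => ‖coeff i (f ^ n)‖ * r ^ i) atTop (𝓝 0) := by
  obtain ⟨s, hrs, hs1⟩ := exists_between hr1
  obtain ⟨M, hM⟩ := (hf s (hr.trans hrs) hs1).bddAbove_range
  exact tendsto_mul_pow_of_forall_mul_pow_le (fun _ => norm_nonneg _) hr.le hrs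
    (norm_coeff_pow_mul_le (w := (s ^ ·)) (fun i j => (pow_add s i j).le)
      (fun i => pow_nonneg (hr.trans hrs).le i) (pow_zero s).le (fun i => hM ⟨i, rfl⟩) n)

theorem norm_factorial_mul_coeff_pow_le {f : K⟦X⟧} (hf : ∀ m, ‖(m ! : K) * coeff m f‖ ≤ 1)
    (h0 : coeff 0 f = 0) (n m : ℕ) : ‖(m ! : K) * coeff m (f ^ n)‖ ≤ ‖(n ! : K)‖ := by
  induction n generalizing m with
  | zero => rcases m with _ | m <;> simp [coeff_one]
  | succ n ih =>
    rcases m with _ | m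
    · simp only [coeff_zero_eq_constantCoeff, map_pow] at h0 ⊢
      simp [h0]
    have hf' : ∀ j, ‖coeff j (d⁄dX K f)‖ * ‖(j ! : K)‖ ≤ 1 := fun j => by
      rw [mul_comm, ← norm_mul, ← factorial_mul_coeff_succ]
      exact hf (j + 1)
    have hprod := norm_coeff_mul_mul_le (w := fun i => ‖(i ! : K)‖) norm_factorial_add_le
      (fun _ => norm_nonneg _) (fun i => by simpa [norm_mul, mul_comm] using ih i) hf' m
    rw [factorial_mul_coeff_succ, derivative_pow, Nat.add_sub_cancel, mul_assoc]
    calc ‖(m ! : K) * coeff m (((n + 1 : ℕ) : K⟦X⟧) * (f ^ n * d⁄dX K f))‖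
        = ‖((n + 1 : ℕ) : K)‖ * (‖coeff m (f ^ n * d⁄dX K f)‖ * ‖(m ! : K)‖) := by
          rw [← map_natCast C, coeff_C_mul, norm_mul, norm_mul]; ring
      _ ≤ ‖((n + 1 : ℕ) : K)‖ * ‖(n ! : K)‖ := by gcongr; simpa using hprod
      _ = ‖((n + 1)! : K)‖ := by rw [Nat.factorial_succ, Nat.cast_mul, norm_mul]

end Ultrametric

theorem stmt0_general (p : ℕ) [Fact p.Prime] (f : PowerSeries ℚ_[p])
    (hf : MemAt p f) (h0 : PowerSeries.coeff 0 f = 0)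
    (n : ℕ) :
    ∃ g : PowerSeries ℚ_[p], MemAt p g ∧ f ^ n = (n ! : ℚ_[p]) • g := by
  have hn! : (n ! : ℚ_[p]) ≠ 0 := by exact_mod_cast n.factorial_ne_zero
  refine ⟨(n ! : ℚ_[p])⁻¹ • f ^ n, ⟨fun m => ?_, fun r hr hr1 => ?_⟩, ?_⟩
  · rw [map_smul, smul_eq_mul, mul_left_comm, norm_mul, norm_inv,
      inv_mul_le_iff₀ (norm_pos_iff.2 hn!), mul_one]
    exact norm_factorial_mul_coeff_pow_le hf.1 h0 n m
  · simpa [mul_assoc] using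
      (tendsto_norm_coeff_pow_mul_pow hf.2 n hr hr1).const_mul ‖(n ! : ℚ_[p])⁻¹‖
  · rw [smul_smul, mul_inv_cancel₀ hn!, one_smul]

theorem stmt0 (p : ℕ) [Fact p.Prime] (f : PowerSeries ℚ_[p])
    (hf : MemAt p f) (h0 : PowerSeries.coeff 0 f = 0)
    (n : ℕ) (hn : 1 ≤ n) :
    ∃ g : PowerSeries ℚ_[p], MemAt p g ∧ f ^ n = (n ! : ℚ_[p]) • g :=
  stmt0_general p f hf h0 n
end

section
/- In Z_p, the ideal p^[r] generated by all p^j/j! with j ≥ r satisfies p^[ℓ] · p^[r] ⊆ p^[ℓ+r] for all nonnegative integers ℓ, r. -/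
/-!
The product of the generators `p^i/i!` and `p^j/j!` is `(i+j).choose i` times the generator
`p^(i+j)/(i+j)!`, and a binomial coefficient is an integer.
-/

open Nat

noncomputable def pIdeal (p : ℕ) [Fact p.Prime] (r : ℕ) : Ideal ℤ_[p] :=
  Ideal.span {x : ℤ_[p] | ∃ j : ℕ, r ≤ j ∧ (x : ℚ_[p]) = (p : ℚ_[p]) ^ j / (j ! : ℚ_[p])}

theorem pow_div_factorial_mul_pow_div_factorial {K : Type*} [Field K] [CharZero K]
    (x : K) (i j : ℕ) :
    x ^ i / i ! * (x ^ j / j !) = (i + j).choose i * (x ^ (i + j) / (i + j)!) := by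
  have hfact : ((i + j)! : K) ≠ 0 := Nat.cast_ne_zero.2 (i + j).factorial_ne_zero
  rw [Nat.cast_add_choose, pow_add]
  field_simp

theorem Padic.norm_pow_div_factorial_le_one (p : ℕ) [Fact p.Prime] (n : ℕ) :
    ‖(p : ℚ_[p]) ^ n / (n ! : ℚ_[p])‖ ≤ 1 := by
  have hp : (p : ℚ_[p]) ≠ 0 := Nat.cast_ne_zero.2 (Fact.out : p.Prime).ne_zero
  have hfact : (n ! : ℚ_[p]) ≠ 0 := Nat.cast_ne_zero.2 n.factorial_ne_zero
  rw [Padic.norm_le_one_iff_val_nonneg, div_eq_mul_inv,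
    Padic.valuation_mul (pow_ne_zero n hp) (inv_ne_zero hfact), Padic.valuation_inv,
    Padic.valuation_pow, Padic.valuation_p, Padic.valuation_natCast]
  have := padicValNat_factorial_le (p := p) n
  omega

namespace PadicInt

variable (p : ℕ) [Fact p.Prime]

noncomputable def powDivFactorial (n : ℕ) : ℤ_[p] :=
  ⟨(p : ℚ_[p]) ^ n / n !, Padic.norm_pow_div_factorial_le_one p n⟩

theorem powDivFactorial_mul_powDivFactorial (i j : ℕ) :
    powDivFactorial p i * powDivFactorial p j =
      (i + j).choose i * powDivFactorial p (i + j) :=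
  Subtype.ext <| by
    push_cast [powDivFactorial]
    exact pow_div_factorial_mul_pow_div_factorial _ i j

theorem powDivFactorial_mem_pIdeal {r n : ℕ} (h : r ≤ n) : powDivFactorial p n ∈ pIdeal p r :=
  Ideal.subset_span ⟨n, h, rfl⟩

end PadicInt

open PadicInt in
theorem stmt1 (p : ℕ) [Fact p.Prime] (l r : ℕ) :
    pIdeal p l * pIdeal p r ≤ pIdeal p (l + r) := by
  rw [pIdeal, pIdeal, Ideal.span_mul_span, Ideal.span_le]
  rintro _ ⟨x, ⟨i, hi, hx⟩, y, ⟨j, hj, hy⟩, rfl⟩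
  obtain rfl : x = powDivFactorial p i := Subtype.ext hx
  obtain rfl : y = powDivFactorial p j := Subtype.ext hy
  change powDivFactorial p i * powDivFactorial p j ∈ _
  rw [powDivFactorial_mul_powDivFactorial]
  exact Ideal.mul_mem_left _ _ (powDivFactorial_mem_pIdeal p (Nat.add_le_add hi hj))
end

section
/- Let R be a commutative ring, σ : R → R a ring endomorphism, and Γ a finite free R-module. Let φ : Γ → Γ ⊗_{R,σ} R be an R-linear map whose image lies in p·(Γ ⊗_{R,σ} R), where p ∈ R is such that R is p-adically complete and separated. Then for every n ≥ 1 the map φ^{⊗n} − id⊗1 : Γ^{⊗n} → Γ^{⊗n} ⊗_{R,σ} R is bijective. -/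
private lemma smul_top_pow {R : Type*} [CommRing R] (I : Ideal R) (m : ℕ) :
    (I ^ m • ⊤ : Submodule R R) = I ^ m := by
  rw [smul_eq_mul, Ideal.mul_top]

private lemma aux_bij {R : Type*} [CommRing R] (I : Ideal R) [IsAdicComplete I R]
    {ι : Type*} (T : (ι → R) →+ (ι → R))
    (hT : ∀ (m : ℕ) (y : ι → R), (∀ i, y i ∈ I ^ m) → ∀ i, T y i ∈ I ^ (m + 1)) :
    Function.Bijective (fun y : ι → R => y - T y) := by
  have haus : ∀ x : R, (∀ m : ℕ, x ∈ I ^ m) → x = 0 := by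
    intro x hx
    refine IsHausdorff.haus (inferInstance : IsHausdorff I R) x fun m => ?_
    rw [SModEq.zero, smul_top_pow]
    exact hx m
  constructor
  · intro y y' h
    have hd : y - y' = T (y - y') := by
      rw [map_sub]; exact sub_eq_sub_iff_sub_eq_sub.mp h
    have hmem : ∀ m : ℕ, ∀ i, (y - y') i ∈ I ^ m := by
      intro m
      induction m with
      | zero => intro i; simp
      | succ m ih => intro i; rw [hd]; exact hT m _ ih i
    have : y - y' = 0 := funext fun i => haus _ fun m => hmem m i
    exact sub_eq_zero.mp this
  · intro z
    -- iterate membership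
    have hiter : ∀ (k : ℕ) (i : ι), T^[k] z i ∈ I ^ k := by
      intro k
      induction k with
      | zero => intro i; simp
      | succ k ih =>
        intro i
        rw [Function.iterate_succ_apply']
        exact hT k _ ih i
    set F : ℕ → ι → R := fun m => ∑ k ∈ Finset.range m, T^[k] z with hF
    have hFsucc : ∀ m, F (m + 1) = z + T (F m) := by
      intro m
      show ∑ k ∈ Finset.range (m + 1), T^[k] z = z + T (F m)
      rw [Finset.sum_range_succ']
      have h1 : ∑ k ∈ Finset.range m, T^[k + 1] z = T (F m) := by
        rw [map_sum]
        exact Finset.sum_congr rfl fun k _ => Function.iterate_succ_apply' T k z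
      rw [h1]
      simp [add_comm]
    have hcauchy : ∀ {m m' : ℕ}, m ≤ m' → ∀ i, F m' i - F m i ∈ I ^ m := by
      intro m m' h
      induction m' , h using Nat.le_induction with
      | base => intro i; simp
      | succ m' hm ih =>
        intro i
        have h1 : F (m' + 1) i - F m' i ∈ I ^ m' := by
          have : F (m' + 1) - F m' = T^[m'] z := by
            rw [hF]; simp [Finset.sum_range_succ]
          rw [show F (m' + 1) i - F m' i = (F (m' + 1) - F m') i from rfl, this]
          exact hiter m' i
        have h2 : F (m' + 1) i - F m i
            = (F (m' + 1) i - F m' i) + (F m' i - F m i) := by ring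
        rw [h2]
        exact add_mem (Ideal.pow_le_pow_right hm h1) (ih i)
    have hex : ∀ i, ∃ L : R, ∀ m : ℕ, F m i ≡ L [SMOD (I ^ m • ⊤ : Submodule R R)] := by
      intro i
      refine IsPrecomplete.prec (IsAdicComplete.toIsPrecomplete) ?_
      intro m m' h
      rw [SModEq.sub_mem, smul_top_pow]
      have h1' := (I ^ m).neg_mem (hcauchy h i)
      rwa [neg_sub] at h1'
    choose w hw using hex
    have hwF : ∀ (m : ℕ) (i : ι), F m i - w i ∈ I ^ m := by
      intro m i
      have := hw i m
      rwa [SModEq.sub_mem, smul_top_pow] at this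
    refine ⟨w, ?_⟩
    show w - T w = z
    have : ∀ i, (w i - T w i) - z i = 0 := by
      intro i
      refine haus _ fun m => ?_
      have h1 : w i - F (m + 1) i ∈ I ^ m := by
        have h1' := (I ^ (m + 1)).neg_mem (hwF (m + 1) i)
        rw [neg_sub] at h1'
        exact Ideal.pow_le_pow_right (Nat.le_succ m) h1'
      have h2 : T (F m) i - T w i ∈ I ^ m := by
        have : T (F m - w) i ∈ I ^ (m + 1) := hT m (F m - w) (fun j => hwF m j) i
        have heq : T (F m - w) i = T (F m) i - T w i := by rw [map_sub]; rfl
        rw [heq] at this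
        exact Ideal.pow_le_pow_right (Nat.le_succ m) this
      have hFm : F (m + 1) i = z i + T (F m) i := by
        have := congrFun (hFsucc m) i
        simpa using this
      have key : (w i - T w i) - z i
          = (w i - F (m + 1) i) + (T (F m) i - T w i) := by
        rw [hFm]; ring
      rw [key]
      exact add_mem h1 h2
    have h0 : (w - T w) - z = 0 := by funext i; exact this i
    exact sub_eq_zero.mp h0

theorem stmt6 (R : Type*) [CommRing R] (p : ℕ) (hp : p.Prime)
    [IsAdicComplete (Ideal.span {(p : R)}) R]
    (σ : R →+* R) (hσ : Function.Bijective σ)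
    (N : ℕ) (A : Matrix (Fin N) (Fin N) R)
    (hA : ∀ i j, A i j ∈ Ideal.span {(p : R)})
    (n : ℕ) (hn : 1 ≤ n) :
    Function.Bijective (fun x : (Fin n → Fin N) → R =>
      Matrix.mulVec (Matrix.of fun i j : Fin n → Fin N => ∏ k, A (i k) (j k)) x
        - fun i => σ (x i)) := by
  classical
  set I : Ideal R := Ideal.span {(p : R)} with hI
  set B : Matrix (Fin n → Fin N) (Fin n → Fin N) R :=
    Matrix.of fun i j : Fin n → Fin N => ∏ k, A (i k) (j k) with hB
  have hBmem : ∀ i j, B i j ∈ I := by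
    intro i j
    rw [hI, Ideal.mem_span_singleton]
    have k0 : Fin n := ⟨0, hn⟩
    have h1 : (p : R) ∣ A (i k0) (j k0) := by
      have := hA (i k0) (j k0)
      rwa [Ideal.mem_span_singleton] at this
    exact h1.trans (Finset.dvd_prod_of_mem _ (Finset.mem_univ k0))
  let e : R ≃+* R := RingEquiv.ofBijective σ hσ
  have hsymm : ∀ (m : ℕ) (r : R), r ∈ I ^ m → e.symm r ∈ I ^ m := by
    intro m r hr
    rw [hI, Ideal.span_singleton_pow, Ideal.mem_span_singleton] at hr ⊢
    obtain ⟨c, rfl⟩ := hr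
    refine ⟨e.symm c, ?_⟩
    rw [map_mul]
    congr 1
    rw [map_pow, map_natCast]
  let T : ((Fin n → Fin N) → R) →+ ((Fin n → Fin N) → R) :=
    { toFun := fun y => B.mulVec fun i => e.symm (y i)
      map_zero' := by
        ext i
        simp [Matrix.mulVec]
      map_add' := by
        intro a b
        have : (fun i => e.symm ((a + b) i)) =
            (fun i => e.symm (a i)) + fun i => e.symm (b i) := by
          funext i; simp
        simp only [this, Matrix.mulVec_add] }
  have hT : ∀ (m : ℕ) (y : (Fin n → Fin N) → R),
      (∀ i, y i ∈ I ^ m) → ∀ i, T y i ∈ I ^ (m + 1) := by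
    intro m y hy i
    show (B.mulVec fun j => e.symm (y j)) i ∈ I ^ (m + 1)
    rw [Matrix.mulVec, dotProduct]
    refine Ideal.sum_mem _ fun j _ => ?_
    rw [pow_succ']
    exact Ideal.mul_mem_mul (hBmem i j) (hsymm m (y j) (hy j))
  have hmain := aux_bij I T hT
  have hσpi : Function.Bijective (fun x : (Fin n → Fin N) → R => fun i => σ (x i)) := by
    constructor
    · intro a b h
      funext i
      exact hσ.1 (congrFun h i)
    · intro y
      exact ⟨fun i => (hσ.2 (y i)).choose, funext fun i => (hσ.2 (y i)).choose_spec⟩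
  have hneg : Function.Bijective (fun y : (Fin n → Fin N) → R => -y) :=
    neg_involutive.bijective
  have hcomp := (hneg.comp hmain).comp hσpi
  have heq : (fun x : (Fin n → Fin N) → R =>
      Matrix.mulVec B x - fun i => σ (x i)) =
      ((fun y : (Fin n → Fin N) → R => -y) ∘ (fun y => y - T y)) ∘
        (fun x => fun i => σ (x i)) := by
    funext x
    have hsymmσ : ∀ r : R, e.symm (σ r) = r := fun r => e.symm_apply_apply r
    simp only [Function.comp_apply, neg_sub]
    show Matrix.mulVec B x - (fun i => σ (x i)) =
      T (fun i => σ (x i)) - fun i => σ (x i)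
    congr 1
    show Matrix.mulVec B x = B.mulVec fun i => e.symm (σ (x i))
    simp only [hsymmσ]
  rw [heq]
  exact hcomp
end
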